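/- In the canonical poly-provability model for GLP (W the maximal consistent sets containing GLP, w ⊏ₙ u iff ([n]A ∈ w implies A ∈ u), T_w^n with axioms {B : B ∧ [n]B ∈ w}, and w V p iff p ∈ w; forcing: w ⊩ [n]B iff T_u^n ⊢ B for all u with w ⊏ₙ u), we have the truth lemma: for every formula B of ℒ_ω and every w ∈ W, w ⊩ B iff B ∈ w. -/

import Mathlib

/-- Formulas of the polymodal language `ℒ_ω` with a modality `[n]` for each
`n : ℕ`. -/
inductive GFml : Type
  | atom : ℕ → GFml
  | bot  : GFml
  | imp  : GFml → GFml → GFml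
  | box  : ℕ → GFml → GFml
deriving DecidableEq

/-- Negation. -/
def gneg (A : GFml) : GFml := .imp A .bot

/-- Conjunction. -/
def gand (A B : GFml) : GFml := .imp (.imp A (.imp B .bot)) .bot

/-- Boolean evaluation where boxed formulas act as atoms. -/
def gevalCL (v : GFml → Bool) : GFml → Bool
  | .atom n => v (.atom n)
  | .bot => false
  | .imp A B => !(gevalCL v A) || gevalCL v B
  | .box n A => v (.box n A)

/-- Classical tautology in `ℒ_ω`. -/
def GTaut (A : GFml) : Prop := ∀ v, gevalCL v A = true

/-- The axioms of GLP. -/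
inductive GLPAx : GFml → Prop
  | taut {A} : GTaut A → GLPAx A
  | k (n : ℕ) (A B : GFml) :
      GLPAx (.imp (.box n (.imp A B)) (.imp (.box n A) (.box n B)))
  | four (n : ℕ) (A : GFml) : GLPAx (.imp (.box n A) (.box n (.box n A)))
  | lob (n : ℕ) (A : GFml) :
      GLPAx (.imp (.box n (.imp (.box n A) A)) (.box n A))
  | mono (n : ℕ) (A : GFml) : GLPAx (.imp (.box n A) (.box (n + 1) A))
  | picomp (n : ℕ) (A : GFml) :
      GLPAx (.imp (gneg (.box n A)) (.box (n + 1) (gneg (.box n A))))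

/-- GLP: the axioms, their `[0]`-boxes, and modus ponens. -/
inductive GLPprf : GFml → Prop
  | ax {A} : GLPAx A → GLPprf A
  | boxax {A} : GLPAx A → GLPprf (.box 0 A)
  | mp {A B} : GLPprf (.imp A B) → GLPprf A → GLPprf B

/-- A maximal consistent set containing all theorems of GLP. -/
def GMCS (w : Set GFml) : Prop :=
  (∀ A, GLPprf A → A ∈ w) ∧
  (∀ A B, GFml.imp A B ∈ w → A ∈ w → B ∈ w) ∧
  GFml.bot ∉ w ∧
  (∀ A, A ∈ w ∨ GFml.imp A GFml.bot ∈ w)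

/-- The axiom set of the canonical theory `T_w^n`: `{B : B ∧ [n]B ∈ w}`. -/
def canT (w : Set GFml) (n : ℕ) : Set GFml :=
  {B | gand B (.box n B) ∈ w}

/-- `w ⊏ₙ u` in the canonical model: both are maximal consistent sets
containing GLP and `[n]A ∈ w` implies `A ∈ u`. -/
def canRn (n : ℕ) (w u : Set GFml) : Prop :=
  GMCS w ∧ GMCS u ∧ ∀ A, GFml.box n A ∈ w → A ∈ u

/-- Forcing in the canonical poly-provability model for GLP: atoms read off
membership, Boolean commutation, and `w ⊩ [n]B` iff `B` is an axiom of
`T_u^n` for every `u` with `w ⊏ₙ u`. -/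
def gforce : Set GFml → GFml → Prop
  | w, .atom p => GFml.atom p ∈ w
  | _, .bot => False
  | w, .imp A B => gforce w A → gforce w B
  | w, .box n A => ∀ u, canRn n w u → A ∈ canT u n

/-! The box case is immediate from the definition of `canT`: it only needs the existence
lemma (if `[n]B ∉ w`, then `{E : [n]E ∈ w} ∪ {¬B}` is consistent, by necessitation and K, and
extends to some `u` with `w ⊏ₙ u` and `B ∉ u`) and axiom 4, which puts `[n]B` into every
`⊏ₙ`-successor of a set containing `[n]B`. Maximal consistent extensions come from Zorn's lemma,
derivations being finite. -/

open GFml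

namespace GLPprf

theorem of_taut {A : GFml} (h : GTaut A) : GLPprf A := .ax (.taut h)

theorem imp_self (A : GFml) : GLPprf (imp A A) :=
  of_taut fun v => by simp only [gevalCL]; cases gevalCL v A <;> rfl

theorem imp_imp_self (A B : GFml) : GLPprf (imp B (imp A B)) :=
  of_taut fun v => by
    simp only [gevalCL]; cases gevalCL v A <;> cases gevalCL v B <;> rfl

theorem imp_distrib (A B C : GFml) :
    GLPprf (imp (imp A (imp B C)) (imp (imp A B) (imp A C))) :=
  of_taut fun v => by
    simp only [gevalCL]
    cases gevalCL v A <;> cases gevalCL v B <;> cases gevalCL v C <;> rfl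

theorem not_not_imp (A : GFml) : GLPprf (imp (gneg (gneg A)) A) :=
  of_taut fun v => by simp only [gneg, gevalCL]; cases gevalCL v A <;> rfl

theorem not_imp_imp (A B : GFml) : GLPprf (imp (gneg A) (imp A B)) :=
  of_taut fun v => by
    simp only [gneg, gevalCL]; cases gevalCL v A <;> cases gevalCL v B <;> rfl

theorem and_intro (A B : GFml) : GLPprf (imp A (imp B (gand A B))) :=
  of_taut fun v => by
    simp only [gand, gevalCL]; cases gevalCL v A <;> cases gevalCL v B <;> rfl

theorem and_left (A B : GFml) : GLPprf (imp (gand A B) A) :=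
  of_taut fun v => by
    simp only [gand, gevalCL]; cases gevalCL v A <;> cases gevalCL v B <;> rfl

theorem and_right (A B : GFml) : GLPprf (imp (gand A B) B) :=
  of_taut fun v => by
    simp only [gand, gevalCL]; cases gevalCL v A <;> cases gevalCL v B <;> rfl

theorem box_zero {A : GFml} (h : GLPprf A) : GLPprf (box 0 A) := by
  induction h with
  | ax h => exact .boxax h
  | boxax h => exact .mp (.ax (.four 0 _)) (.boxax h)
  | mp _ _ ih₁ ih₂ => exact .mp (.mp (.ax (.k 0 _ _)) ih₁) ih₂

theorem nec (n : ℕ) {A : GFml} (h : GLPprf A) : GLPprf (box n A) := by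
  induction n with
  | zero => exact box_zero h
  | succ n ih => exact .mp (.ax (.mono n A)) ih

end GLPprf

/-- Derivability in GLP from a set of hypotheses, closed under modus ponens only. -/
inductive GLPDerivable (S : Set GFml) : GFml → Prop
  | prf {A} : GLPprf A → GLPDerivable S A
  | hyp {A} : A ∈ S → GLPDerivable S A
  | mp {A B} : GLPDerivable S (imp A B) → GLPDerivable S A → GLPDerivable S B

def GLPConsistent (S : Set GFml) : Prop := ¬ GLPDerivable S bot

namespace GLPDerivable

theorem mono {S T : Set GFml} (hST : S ⊆ T) {A : GFml} (h : GLPDerivable S A) :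
    GLPDerivable T A := by
  induction h with
  | prf h => exact .prf h
  | hyp h => exact .hyp (hST h)
  | mp _ _ ih₁ ih₂ => exact .mp ih₁ ih₂

theorem imp_of_insert {S : Set GFml} {A B : GFml} (h : GLPDerivable (insert A S) B) :
    GLPDerivable S (imp A B) := by
  induction h with
  | @prf C h => exact .mp (.prf (GLPprf.imp_imp_self A C)) (.prf h)
  | @hyp C h =>
      rcases h with rfl | h
      · exact .prf (GLPprf.imp_self C)
      · exact .mp (.prf (GLPprf.imp_imp_self A C)) (.hyp h)
  | mp _ _ ih₁ ih₂ => exact .mp (.mp (.prf (GLPprf.imp_distrib _ _ _)) ih₁) ih₂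

theorem exists_mem_of_sUnion {c : Set (Set GFml)} (hne : c.Nonempty)
    (hc : DirectedOn (· ⊆ ·) c) {A : GFml} (h : GLPDerivable (⋃₀ c) A) :
    ∃ S ∈ c, GLPDerivable S A := by
  induction h with
  | prf h => exact ⟨hne.some, hne.some_mem, .prf h⟩
  | hyp h =>
      obtain ⟨S, hS, hA⟩ := Set.mem_sUnion.mp h
      exact ⟨S, hS, .hyp hA⟩
  | mp _ _ ih₁ ih₂ =>
      obtain ⟨S₁, hS₁, h₁⟩ := ih₁
      obtain ⟨S₂, hS₂, h₂⟩ := ih₂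
      obtain ⟨T, hT, hST₁, hST₂⟩ := hc S₁ hS₁ S₂ hS₂
      exact ⟨T, hT, .mp (h₁.mono hST₁) (h₂.mono hST₂)⟩

end GLPDerivable

theorem GLPConsistent.insert {S : Set GFml} (hS : GLPConsistent S) {A : GFml}
    (hA : GLPDerivable S A) : GLPConsistent (insert A S) :=
  fun h => hS (.mp h.imp_of_insert hA)

theorem GLPConsistent.sUnion {c : Set (Set GFml)} (hne : c.Nonempty)
    (hc : DirectedOn (· ⊆ ·) c) (hcon : ∀ S ∈ c, GLPConsistent S) :
    GLPConsistent (⋃₀ c) := fun h =>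
  let ⟨S, hS, hbot⟩ := GLPDerivable.exists_mem_of_sUnion hne hc h
  hcon S hS hbot

theorem mem_of_maximal_of_consistent_insert {w : Set GFml} (hw : Maximal GLPConsistent w)
    {A : GFml} (hA : GLPConsistent (insert A w)) : A ∈ w :=
  (hw.eq_of_subset hA (Set.subset_insert A w)).symm ▸ Set.mem_insert A w

/-- A maximal consistent set is deductively closed, since adding a consequence keeps it
consistent, and complete, since `insert A w ⊢ ⊥` gives `w ⊢ ¬A`. -/
theorem GMCS.of_maximal {w : Set GFml} (hw : Maximal GLPConsistent w) : GMCS w := by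
  have closed (A : GFml) (hA : GLPDerivable w A) : A ∈ w :=
    mem_of_maximal_of_consistent_insert hw (hw.prop.insert hA)
  refine ⟨fun A hA => closed A (.prf hA),
    fun A B hAB hA => closed B (.mp (.hyp hAB) (.hyp hA)),
    fun h => hw.prop (.hyp h), fun A => or_iff_not_imp_left.mpr fun hA => closed _ ?_⟩
  exact GLPDerivable.imp_of_insert
    (not_not.mp fun hcon => hA (mem_of_maximal_of_consistent_insert hw hcon))

theorem exists_gmcs_superset {S : Set GFml} (hS : GLPConsistent S) :
    ∃ w, GMCS w ∧ S ⊆ w := by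
  obtain ⟨w, hSw, hw⟩ := zorn_subset_nonempty {T | GLPConsistent T}
    (fun c hc hchain hne => ⟨⋃₀ c, .sUnion hne hchain.directedOn hc,
      fun _ => Set.subset_sUnion_of_mem⟩) S hS
  exact ⟨w, .of_maximal hw, hSw⟩

namespace GMCS

variable {w : Set GFml}

theorem mem_of_prf (hw : GMCS w) {A : GFml} (h : GLPprf A) : A ∈ w := hw.1 A h

theorem mem_of_imp_mem (hw : GMCS w) {A B : GFml} (hAB : imp A B ∈ w) (hA : A ∈ w) :
    B ∈ w :=
  hw.2.1 A B hAB hA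

theorem mem_of_prf_imp (hw : GMCS w) {A B : GFml} (h : GLPprf (imp A B)) (hA : A ∈ w) :
    B ∈ w :=
  hw.mem_of_imp_mem (hw.mem_of_prf h) hA

theorem bot_not_mem (hw : GMCS w) : bot ∉ w := hw.2.2.1

theorem imp_mem_iff (hw : GMCS w) {A B : GFml} : imp A B ∈ w ↔ (A ∈ w → B ∈ w) := by
  refine ⟨hw.mem_of_imp_mem, fun h => ?_⟩
  rcases hw.2.2.2 A with hA | hA
  · exact hw.mem_of_prf_imp (GLPprf.imp_imp_self A B) (h hA)
  · exact hw.mem_of_prf_imp (GLPprf.not_imp_imp A B) hA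

theorem gand_mem_iff (hw : GMCS w) {A B : GFml} : gand A B ∈ w ↔ A ∈ w ∧ B ∈ w :=
  ⟨fun h => ⟨hw.mem_of_prf_imp (GLPprf.and_left A B) h,
      hw.mem_of_prf_imp (GLPprf.and_right A B) h⟩,
    fun ⟨hA, hB⟩ => hw.mem_of_imp_mem (hw.mem_of_prf_imp (GLPprf.and_intro A B) hA) hB⟩

theorem box_mem_of_derivable (hw : GMCS w) {n : ℕ} {C : GFml}
    (h : GLPDerivable {E | box n E ∈ w} C) : box n C ∈ w := by
  induction h with
  | prf h => exact hw.mem_of_prf (GLPprf.nec n h)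
  | hyp h => exact h
  | mp _ _ ih₁ ih₂ => exact hw.mem_of_imp_mem (hw.mem_of_prf_imp (.ax (.k n _ _)) ih₁) ih₂

theorem exists_canRn_not_mem (hw : GMCS w) {n : ℕ} {C : GFml} (hC : box n C ∉ w) :
    ∃ u, canRn n w u ∧ C ∉ u := by
  have hcon : GLPConsistent (insert (gneg C) {E | box n E ∈ w}) := fun h =>
    hC (hw.box_mem_of_derivable (.mp (.prf (GLPprf.not_not_imp C)) h.imp_of_insert))
  obtain ⟨u, hu, hsub⟩ := exists_gmcs_superset hcon
  exact ⟨u, ⟨hw, hu, fun A hA => hsub (Set.mem_insert_of_mem _ hA)⟩,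
    fun hCu => hu.bot_not_mem (hu.mem_of_imp_mem (hsub (Set.mem_insert _ _)) hCu)⟩

theorem mem_canT_iff (hw : GMCS w) {n : ℕ} {B : GFml} :
    B ∈ canT w n ↔ B ∈ w ∧ box n B ∈ w :=
  hw.gand_mem_iff

theorem forall_canRn_mem_canT_iff (hw : GMCS w) {n : ℕ} {B : GFml} :
    (∀ u, canRn n w u → B ∈ canT u n) ↔ box n B ∈ w := by
  refine ⟨fun h => by_contra fun hB => ?_, fun hB u hwu => ?_⟩
  · obtain ⟨u, hwu, hBu⟩ := hw.exists_canRn_not_mem hB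
    exact hBu ((hwu.2.1.mem_canT_iff.mp (h u hwu)).1)
  · exact hwu.2.1.mem_canT_iff.mpr
      ⟨hwu.2.2 B hB, hwu.2.2 _ (hw.mem_of_prf_imp (.ax (.four n B)) hB)⟩

end GMCS

/-- Truth lemma for the canonical poly-provability model for GLP: for every
formula `B` and every maximal consistent set `w` containing GLP,
`w ⊩ B` iff `B ∈ w`. -/
theorem GLP_truth_lemma :
    ∀ (B : GFml) (w : Set GFml), GMCS w → (gforce w B ↔ B ∈ w) := by
  intro B
  induction B with
  | atom p => exact fun _ _ => Iff.rfl
  | bot => exact fun _ hw => iff_of_false id hw.bot_not_mem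
  | imp A B ihA ihB =>
      intro w hw
      rw [hw.imp_mem_iff, ← ihA w hw, ← ihB w hw]
      rfl
  | box n B => exact fun _ hw => hw.forall_canRn_mem_canT_iff
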